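/- arXiv:math-ph/0610025 — 3 statements merged into one kernel-verified Lean document; each statement's English description precedes it below -/
import Mathlib

section
/- Let F(θ) = (1/2) ∫_{[-π,π]²} (2π)^{-2} log[sin²(θ)|1-e^{ik_1}|² + cos²(θ)|1-e^{ik_2}|²] dk. Then F(θ) ≥ (sin²θ) F(π/2) + (cos²θ) F(0) for all θ, and consequently F attains its minimum over [0,2π) exactly at θ ∈ {0, π/2, π, 3π/2}. -/
open MeasureTheory

/-- Spin-wave free energy of the 2D orbital compass model:
`F(θ) = ½ ∫_{[-π,π]²} (2π)⁻² log[sin²θ |1-e^{ik₁}|² + cos²θ |1-e^{ik₂}|²] dk`. -/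
noncomputable def compassFreeEnergy (θ : ℝ) : ℝ :=
  (1 / 2) * ∫ k in (Set.Icc (-Real.pi) Real.pi ×ˢ Set.Icc (-Real.pi) Real.pi : Set (ℝ × ℝ)),
    ((2 * Real.pi) ^ 2)⁻¹ *
      Real.log (Real.sin θ ^ 2 * ‖1 - Complex.exp (Complex.I * (k.1 : ℂ))‖ ^ 2
        + Real.cos θ ^ 2 * ‖1 - Complex.exp (Complex.I * (k.2 : ℂ))‖ ^ 2)

namespace CompassAux

open Real

lemma abs_sq_eq (t : ℝ) :
    ‖1 - Complex.exp (Complex.I * (t : ℂ))‖ ^ 2 = 2 - 2 * Real.cos t := by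
  have h : (1 : ℂ) - Complex.exp (Complex.I * (t : ℂ))
      = Complex.ofReal (1 - Real.cos t) + Complex.ofReal (-Real.sin t) * Complex.I := by
    rw [mul_comm, Complex.exp_mul_I, ← Complex.ofReal_cos, ← Complex.ofReal_sin]
    push_cast
    ring
  rw [h, Complex.sq_norm, Complex.normSq_add_mul_I]
  nlinarith [Real.sin_sq_add_cos_sq t]

lemma int_log_Ioo : IntegrableOn Real.log (Set.Ioo (0:ℝ) 1) := by
  have h := intervalIntegral.integrableOn_deriv_of_nonneg
    (a := (0:ℝ)) (b := 1) (g := fun x => x - x * Real.log x) (g' := fun x => -Real.log x)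
    (by fun_prop) ?_ ?_
  · have h3 : IntegrableOn Real.log (Set.Ioc (0:ℝ) 1) := by
      have h2 := h.neg
      have e : (-fun x => -Real.log x) = Real.log := by funext x; simp
      rwa [e] at h2
    exact h3.mono_set Set.Ioo_subset_Ioc_self
  · intro x hx
    have h1 : HasDerivAt (fun x : ℝ => x * Real.log x) (Real.log x + 1) x :=
      Real.hasDerivAt_mul_log hx.1.ne'
    exact ((hasDerivAt_id' x).sub h1).congr_deriv (by ring)
  · intro x hx
    simp only [neg_nonneg]
    exact Real.log_nonpos hx.1.le hx.2.le

lemma two_sub_le {t : ℝ} : 2 - 2 * Real.cos t ≤ t ^ 2 := by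
  nlinarith [Real.one_sub_sq_div_two_le_cos (x := t)]

lemma le_two_sub {t : ℝ} (ht : |t| ≤ π) : 4 / π ^ 2 * t ^ 2 ≤ 2 - 2 * Real.cos t := by
  have h := Real.cos_le_one_sub_mul_cos_sq ht
  have e : 4 / π ^ 2 * t ^ 2 = 2 * (2 / π ^ 2 * t ^ 2) := by ring
  linarith

lemma two_sub_pos {t : ℝ} (ht : t ≠ 0) (ht' : |t| ≤ π) : 0 < 2 - 2 * Real.cos t := by
  have h := le_two_sub ht'
  have : 0 < 4 / π ^ 2 * t ^ 2 := by
    have := Real.pi_pos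
    positivity
  linarith

lemma bound1 {t : ℝ} (ht : t ∈ Set.Ioc (0:ℝ) π) :
    |Real.log (2 - 2 * Real.cos t)| ≤ 2 * |Real.log t| + 2 * Real.log π := by
  have hπ := Real.pi_pos
  have hπ1 := Real.two_le_pi
  have ht0 : 0 < t := ht.1
  have htπ : |t| ≤ π := by rw [abs_of_pos ht0]; exact ht.2
  have hpos := two_sub_pos ht0.ne' htπ
  have hlogπ : 0 ≤ Real.log π := Real.log_nonneg (by linarith)
  have hup : Real.log (2 - 2 * Real.cos t) ≤ 2 * Real.log t := by
    calc Real.log (2 - 2 * Real.cos t) ≤ Real.log (t ^ 2) :=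
          Real.log_le_log hpos two_sub_le
      _ = 2 * Real.log t := by rw [Real.log_pow]; push_cast; ring
  have hlo : Real.log 4 - 2 * Real.log π + 2 * Real.log t ≤ Real.log (2 - 2 * Real.cos t) := by
    have h1 : 0 < 4 / π ^ 2 * t ^ 2 := by positivity
    have h2 := Real.log_le_log h1 (le_two_sub htπ)
    have h3 : Real.log (4 / π ^ 2 * t ^ 2)
        = Real.log 4 - 2 * Real.log π + 2 * Real.log t := by
      rw [Real.log_mul (by positivity) (by positivity), Real.log_div (by norm_num) (by positivity),
        Real.log_pow, Real.log_pow]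
      push_cast; ring
    linarith [h3 ▸ h2]
  rw [abs_le]
  constructor
  · have h4 : (0:ℝ) ≤ Real.log 4 := Real.log_nonneg (by norm_num)
    have ha : -|Real.log t| ≤ Real.log t := neg_abs_le _
    nlinarith
  · have ha : Real.log t ≤ |Real.log t| := le_abs_self _
    nlinarith

lemma intOn_g : IntegrableOn (fun t => Real.log (2 - 2 * Real.cos t)) (Set.Icc (-π) π) := by
  have hlog01 : IntervalIntegrable Real.log volume 0 1 := by
    rw [intervalIntegrable_iff_integrableOn_Ioo_of_le (by norm_num)]
    exact int_log_Ioo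
  have hlog1π : IntervalIntegrable Real.log volume 1 π := by
    apply intervalIntegral.intervalIntegrable_log
    intro h
    rcases Set.mem_uIcc.mp h with ⟨h1, _⟩ | ⟨_, h2⟩
    · linarith
    · linarith [Real.pi_gt_three]
  have hlog : IntervalIntegrable Real.log volume 0 π := hlog01.trans hlog1π
  have hD : IntervalIntegrable (fun t => 2 * |Real.log t| + 2 * Real.log π) volume 0 π :=
    (hlog.abs.const_mul 2).add intervalIntegrable_const
  have h0π : IntervalIntegrable (fun t => Real.log (2 - 2 * Real.cos t)) volume 0 π := by
    apply hD.mono_fun'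
    · exact (Real.measurable_log.comp (by fun_prop)).aestronglyMeasurable
    · rw [Set.uIoc_of_le Real.pi_pos.le]
      filter_upwards [ae_restrict_mem measurableSet_Ioc] with t ht
      simpa using bound1 ht
  have hneg : IntervalIntegrable (fun t => Real.log (2 - 2 * Real.cos t)) volume (-π) 0 := by
    have h2 := (IntervalIntegrable.iff_comp_neg (by simp)).mp h0π.symm
    have e : (fun x : ℝ => Real.log (2 - 2 * Real.cos (-x)))
        = fun x => Real.log (2 - 2 * Real.cos x) := by
      funext x; rw [Real.cos_neg]
    rw [e, neg_zero] at h2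
    exact h2
  have := hneg.trans h0π
  rw [intervalIntegrable_iff_integrableOn_Ioc_of_le (by linarith [Real.pi_pos])] at this
  rwa [integrableOn_Icc_iff_integrableOn_Ioc]


noncomputable def mu1 : Measure ℝ := volume.restrict (Set.Icc (-π) π)

instance : IsFiniteMeasure mu1 := by
  constructor
  rw [mu1, Measure.restrict_apply_univ, Real.volume_Icc]
  exact ENNReal.ofReal_lt_top

lemma mu1_univ : mu1 Set.univ = ENNReal.ofReal (2 * π) := by
  rw [mu1, Measure.restrict_apply_univ, Real.volume_Icc]
  congr 1
  ring

lemma measure_restrict_sq :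
    (volume : Measure (ℝ × ℝ)).restrict (Set.Icc (-π) π ×ˢ Set.Icc (-π) π)
      = mu1.prod mu1 := by
  rw [Measure.volume_eq_prod, ← Measure.prod_restrict, mu1]

lemma prod_ne_zero : mu1.prod mu1 Set.univ ≠ 0 := by
  rw [← Set.univ_prod_univ, Measure.prod_prod, mu1_univ]
  have : (0:ℝ) < 2 * π := by linarith [Real.pi_pos]
  simp [ENNReal.ofReal_pos.mpr this, (ENNReal.ofReal_pos.mpr this).ne', Real.pi_pos]

lemma null_fst : mu1.prod mu1 {p : ℝ × ℝ | p.1 = 0} = 0 := by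
  have : {p : ℝ × ℝ | p.1 = 0} = ({0} : Set ℝ) ×ˢ (Set.univ : Set ℝ) := by
    ext p
    simp only [Set.mem_setOf_eq, Set.mem_prod, Set.mem_singleton_iff, Set.mem_univ, and_true]
  rw [this, Measure.prod_prod]
  have : mu1 {0} = 0 := by
    rw [mu1]
    exact le_antisymm (le_trans (Measure.restrict_le_self _) (by simp)) zero_le
  simp [this]

lemma null_snd : mu1.prod mu1 {p : ℝ × ℝ | p.2 = 0} = 0 := by
  have : {p : ℝ × ℝ | p.2 = 0} = (Set.univ : Set ℝ) ×ˢ ({0} : Set ℝ) := by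
    ext p
    simp only [Set.mem_setOf_eq, Set.mem_prod, Set.mem_singleton_iff, Set.mem_univ, true_and]
  rw [this, Measure.prod_prod]
  have : mu1 {0} = 0 := by
    rw [mu1]
    exact le_antisymm (le_trans (Measure.restrict_le_self _) (by simp)) zero_le
  simp [this]

lemma null_diag : mu1.prod mu1 {p : ℝ × ℝ | Real.cos p.1 = Real.cos p.2} = 0 := by
  have hT : MeasurableSet {p : ℝ × ℝ | Real.cos p.1 = Real.cos p.2} :=
    measurableSet_eq_fun (by fun_prop) (by fun_prop)
  rw [Measure.prod_apply hT]
  have hz : ∀ x : ℝ, mu1 (Prod.mk x ⁻¹' {p : ℝ × ℝ | Real.cos p.1 = Real.cos p.2}) = 0 := by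
    intro x
    rw [mu1, Measure.restrict_apply' measurableSet_Icc]
    apply measure_mono_null
      (t := ({Real.arccos (Real.cos x), -Real.arccos (Real.cos x)} : Set ℝ))
    · rintro y ⟨hy1, hy2⟩
      simp only [Set.mem_preimage, Set.mem_setOf_eq] at hy1
      simp only [Set.mem_Icc] at hy2
      have hya : |y| ∈ Set.Icc (0:ℝ) π := by
        rw [Set.mem_Icc]
        constructor
        · exact abs_nonneg y
        · rw [abs_le]; exact hy2
      have : Real.arccos (Real.cos x) = |y| := by
        rw [← Real.cos_abs y] at hy1
        rw [hy1, Real.arccos_cos hya.1 hya.2]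
      have hy : y = Real.arccos (Real.cos x) ∨ y = -Real.arccos (Real.cos x) := by
        rcases abs_cases y with ⟨h, _⟩ | ⟨h, _⟩
        · left; rw [this]; exact h.symm
        · right; rw [this, h]; ring
      simpa using hy
    · exact Set.Finite.measure_zero (by simp) volume
  simp only [hz]
  simp

lemma jensen_le {a b s c : ℝ} (ha : 0 < a) (hb : 0 < b) (hs : 0 ≤ s) (hc : 0 ≤ c)
    (hsc : s + c = 1) : s * Real.log a + c * Real.log b ≤ Real.log (s * a + c * b) := by
  have := (strictConcaveOn_log_Ioi.concaveOn).2 (Set.mem_Ioi.mpr ha) (Set.mem_Ioi.mpr hb)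
    hs hc hsc
  simpa [smul_eq_mul] using this

lemma jensen_lt {a b s c : ℝ} (ha : 0 < a) (hb : 0 < b) (hab : a ≠ b) (hs : 0 < s) (hc : 0 < c)
    (hsc : s + c = 1) : s * Real.log a + c * Real.log b < Real.log (s * a + c * b) := by
  have := strictConcaveOn_log_Ioi.2 (Set.mem_Ioi.mpr ha) (Set.mem_Ioi.mpr hb) hab hs hc hsc
  simpa [smul_eq_mul] using this

lemma bound2 {a b s c : ℝ} (ha : 0 < a) (ha4 : a ≤ 4) (hb : 0 < b) (hb4 : b ≤ 4)
    (hs : 0 ≤ s) (hc : 0 ≤ c) (hsc : s + c = 1) :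
    |Real.log (s * a + c * b)| ≤ |Real.log a| + |Real.log b| + Real.log 8 := by
  have hmin : min a b ≤ s * a + c * b := by
    have e : s * min a b + c * min a b = min a b := by rw [← add_mul, hsc, one_mul]
    have h1 := mul_le_mul_of_nonneg_left (min_le_left a b) hs
    have h2 := mul_le_mul_of_nonneg_left (min_le_right a b) hc
    linarith
  have hminpos : 0 < min a b := lt_min ha hb
  have hpos : 0 < s * a + c * b := lt_of_lt_of_le hminpos hmin
  have h8 : (0:ℝ) ≤ Real.log 8 := Real.log_nonneg (by norm_num)
  have hup : Real.log (s * a + c * b) ≤ Real.log 8 :=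
    Real.log_le_log hpos (by nlinarith)
  have hlo : Real.log (min a b) ≤ Real.log (s * a + c * b) := Real.log_le_log hminpos hmin
  have hlo2 : -(|Real.log a| + |Real.log b|) ≤ Real.log (min a b) := by
    rcases min_cases a b with ⟨h, _⟩ | ⟨h, _⟩ <;> rw [h]
    · nlinarith [neg_abs_le (Real.log a), abs_nonneg (Real.log b)]
    · nlinarith [neg_abs_le (Real.log b), abs_nonneg (Real.log a)]
  rw [abs_le]
  constructor
  · nlinarith
  · nlinarith [abs_nonneg (Real.log a), abs_nonneg (Real.log b)]

lemma intA : Integrable (fun k : ℝ × ℝ => Real.log (2 - 2 * Real.cos k.1)) (mu1.prod mu1) := by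
  have h1 : Integrable (fun t => Real.log (2 - 2 * Real.cos t)) mu1 := intOn_g
  have h2 : Integrable (fun _ : ℝ => (1:ℝ)) mu1 := integrable_const 1
  have := h1.mul_prod h2
  simpa using this

lemma intB : Integrable (fun k : ℝ × ℝ => Real.log (2 - 2 * Real.cos k.2)) (mu1.prod mu1) := by
  have h1 : Integrable (fun t => Real.log (2 - 2 * Real.cos t)) mu1 := intOn_g
  have h2 : Integrable (fun _ : ℝ => (1:ℝ)) mu1 := integrable_const 1
  have := h2.mul_prod h1
  simpa using this

lemma ae_mem_sq : ∀ᵐ k ∂(mu1.prod mu1), k ∈ Set.Icc (-π) π ×ˢ Set.Icc (-π) π := by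
  rw [← measure_restrict_sq]
  exact ae_restrict_mem (measurableSet_Icc.prod measurableSet_Icc)

lemma ae_pos : ∀ᵐ k ∂(mu1.prod mu1),
    (0 < 2 - 2 * Real.cos k.1 ∧ 2 - 2 * Real.cos k.1 ≤ 4) ∧
    (0 < 2 - 2 * Real.cos k.2 ∧ 2 - 2 * Real.cos k.2 ≤ 4) := by
  have h1 : ∀ᵐ k ∂(mu1.prod mu1), k.1 ≠ 0 := by
    rw [ae_iff]; simpa [not_not] using null_fst
  have h2 : ∀ᵐ k ∂(mu1.prod mu1), k.2 ≠ 0 := by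
    rw [ae_iff]; simpa [not_not] using null_snd
  filter_upwards [ae_mem_sq, h1, h2] with k hk hk1 hk2
  have hm1 : |k.1| ≤ π := abs_le.mpr ⟨hk.1.1, hk.1.2⟩
  have hm2 : |k.2| ≤ π := abs_le.mpr ⟨hk.2.1, hk.2.2⟩
  exact ⟨⟨two_sub_pos hk1 hm1, by nlinarith [Real.neg_one_le_cos k.1]⟩,
    ⟨two_sub_pos hk2 hm2, by nlinarith [Real.neg_one_le_cos k.2]⟩⟩

lemma intMain {s c : ℝ} (hs : 0 ≤ s) (hc : 0 ≤ c) (hsc : s + c = 1) :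
    Integrable
      (fun k : ℝ × ℝ => Real.log (s * (2 - 2 * Real.cos k.1) + c * (2 - 2 * Real.cos k.2)))
      (mu1.prod mu1) := by
  apply Integrable.mono'
    (g := fun k : ℝ × ℝ =>
      |Real.log (2 - 2 * Real.cos k.1)| + |Real.log (2 - 2 * Real.cos k.2)| + Real.log 8)
  · exact (intA.abs.add intB.abs).add (integrable_const _)
  · exact (Real.measurable_log.comp (by fun_prop)).aestronglyMeasurable
  · filter_upwards [ae_pos] with k hk
    rw [Real.norm_eq_abs]
    exact bound2 hk.1.1 hk.1.2 hk.2.1 hk.2.2 hs hc hsc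

lemma F_eq (θ : ℝ) : compassFreeEnergy θ
    = (1/2) * ∫ k : ℝ × ℝ, ((2 * π) ^ 2)⁻¹ *
        Real.log (Real.sin θ ^ 2 * (2 - 2 * Real.cos k.1)
          + Real.cos θ ^ 2 * (2 - 2 * Real.cos k.2)) ∂(mu1.prod mu1) := by
  rw [compassFreeEnergy, ← measure_restrict_sq]
  simp only [abs_sq_eq]

lemma F_half_pi : compassFreeEnergy (π / 2)
    = (1/2) * ∫ k : ℝ × ℝ, ((2 * π) ^ 2)⁻¹ *
        Real.log (2 - 2 * Real.cos k.1) ∂(mu1.prod mu1) := by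
  rw [F_eq]
  simp [Real.sin_pi_div_two, Real.cos_pi_div_two]

lemma F_zero : compassFreeEnergy 0
    = (1/2) * ∫ k : ℝ × ℝ, ((2 * π) ^ 2)⁻¹ *
        Real.log (2 - 2 * Real.cos k.2) ∂(mu1.prod mu1) := by
  rw [F_eq]
  simp

lemma F_pi : compassFreeEnergy π = compassFreeEnergy 0 := by
  rw [F_eq, F_eq]
  simp

lemma F_three : compassFreeEnergy (3 * π / 2) = compassFreeEnergy (π / 2) := by
  have hs : Real.sin (3 * π / 2) = -1 := by
    rw [show (3 * π / 2 : ℝ) = π + π / 2 by ring, Real.sin_add]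
    simp
  have hc : Real.cos (3 * π / 2) = 0 := by
    rw [show (3 * π / 2 : ℝ) = π + π / 2 by ring, Real.cos_add]
    simp
  rw [F_eq, F_eq, hs, hc]
  simp [Real.sin_pi_div_two, Real.cos_pi_div_two]

lemma F_swap : compassFreeEnergy (π / 2) = compassFreeEnergy 0 := by
  rw [F_half_pi, F_zero]
  congr 1
  have := integral_prod_swap (μ := mu1) (ν := mu1)
    (f := fun z : ℝ × ℝ => ((2 * π) ^ 2)⁻¹ * Real.log (2 - 2 * Real.cos z.2))
  simpa using this

lemma ae_le (s c : ℝ) (hs : 0 ≤ s) (hc : 0 ≤ c) (hsc : s + c = 1) :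
    (fun k : ℝ × ℝ => s * (((2 * π) ^ 2)⁻¹ * Real.log (2 - 2 * Real.cos k.1))
        + c * (((2 * π) ^ 2)⁻¹ * Real.log (2 - 2 * Real.cos k.2)))
      ≤ᵐ[mu1.prod mu1]
    (fun k : ℝ × ℝ => ((2 * π) ^ 2)⁻¹ *
        Real.log (s * (2 - 2 * Real.cos k.1) + c * (2 - 2 * Real.cos k.2))) := by
  have hπ := Real.pi_pos
  have hc0 : (0:ℝ) ≤ ((2 * π) ^ 2)⁻¹ := by positivity
  filter_upwards [ae_pos] with k hk
  have hj := jensen_le hk.1.1 hk.2.1 hs hc hsc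
  have := mul_le_mul_of_nonneg_left hj hc0
  nlinarith [this]

lemma int_g (s c : ℝ) :
    Integrable (fun k : ℝ × ℝ =>
      s * (((2 * π) ^ 2)⁻¹ * Real.log (2 - 2 * Real.cos k.1))
        + c * (((2 * π) ^ 2)⁻¹ * Real.log (2 - 2 * Real.cos k.2))) (mu1.prod mu1) :=
  ((intA.const_mul _).const_mul _).add ((intB.const_mul _).const_mul _)

lemma int_f {s c : ℝ} (hs : 0 ≤ s) (hc : 0 ≤ c) (hsc : s + c = 1) :
    Integrable (fun k : ℝ × ℝ => ((2 * π) ^ 2)⁻¹ *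
      Real.log (s * (2 - 2 * Real.cos k.1) + c * (2 - 2 * Real.cos k.2))) (mu1.prod mu1) :=
  (intMain hs hc hsc).const_mul _

lemma lhs_eq (θ : ℝ) :
    Real.sin θ ^ 2 * compassFreeEnergy (π / 2) + Real.cos θ ^ 2 * compassFreeEnergy 0
      = (1/2) * ∫ k : ℝ × ℝ,
          (Real.sin θ ^ 2 * (((2 * π) ^ 2)⁻¹ * Real.log (2 - 2 * Real.cos k.1))
            + Real.cos θ ^ 2 * (((2 * π) ^ 2)⁻¹ * Real.log (2 - 2 * Real.cos k.2)))
          ∂(mu1.prod mu1) := by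
  rw [F_half_pi, F_zero,
    integral_add ((intA.const_mul _).const_mul _) ((intB.const_mul _).const_mul _),
]
  simp only [integral_const_mul]
  ring

lemma key_le (θ : ℝ) :
    Real.sin θ ^ 2 * compassFreeEnergy (π / 2) + Real.cos θ ^ 2 * compassFreeEnergy 0
      ≤ compassFreeEnergy θ := by
  have hs : (0:ℝ) ≤ Real.sin θ ^ 2 := sq_nonneg _
  have hc : (0:ℝ) ≤ Real.cos θ ^ 2 := sq_nonneg _
  have hsc := Real.sin_sq_add_cos_sq θ
  rw [lhs_eq, F_eq]
  have := integral_mono_ae (int_g _ _) (int_f hs hc hsc) (ae_le _ _ hs hc hsc)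
  linarith

lemma key_lt {θ : ℝ} (hsin : Real.sin θ ≠ 0) (hcos : Real.cos θ ≠ 0) :
    Real.sin θ ^ 2 * compassFreeEnergy (π / 2) + Real.cos θ ^ 2 * compassFreeEnergy 0
      < compassFreeEnergy θ := by
  have hs : (0:ℝ) < Real.sin θ ^ 2 := by positivity
  have hc : (0:ℝ) < Real.cos θ ^ 2 := by positivity
  have hsc := Real.sin_sq_add_cos_sq θ
  set g := fun k : ℝ × ℝ =>
      Real.sin θ ^ 2 * (((2 * π) ^ 2)⁻¹ * Real.log (2 - 2 * Real.cos k.1))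
        + Real.cos θ ^ 2 * (((2 * π) ^ 2)⁻¹ * Real.log (2 - 2 * Real.cos k.2)) with hgdef
  set f := fun k : ℝ × ℝ => ((2 * π) ^ 2)⁻¹ *
      Real.log (Real.sin θ ^ 2 * (2 - 2 * Real.cos k.1)
        + Real.cos θ ^ 2 * (2 - 2 * Real.cos k.2)) with hfdef
  have hgi : Integrable g (mu1.prod mu1) := int_g _ _
  have hfi : Integrable f (mu1.prod mu1) := int_f hs.le hc.le hsc
  have hle : g ≤ᵐ[mu1.prod mu1] f := ae_le _ _ hs.le hc.le hsc
  have hne : ∀ᵐ k ∂(mu1.prod mu1), Real.cos k.1 ≠ Real.cos k.2 := by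
    rw [ae_iff]; simpa [not_not] using null_diag
  have hpos : ∀ᵐ k ∂(mu1.prod mu1), 0 < f k - g k := by
    have hπ := Real.pi_pos
    have hc0 : (0:ℝ) < ((2 * π) ^ 2)⁻¹ := by positivity
    filter_upwards [ae_pos, hne] with k hk hkne
    have hab : (2 - 2 * Real.cos k.1) ≠ (2 - 2 * Real.cos k.2) := by
      intro h; apply hkne; linarith
    have hj := jensen_lt hk.1.1 hk.2.1 hab hs hc hsc
    have := mul_lt_mul_of_pos_left hj hc0
    simp only [hgdef, hfdef]
    nlinarith [this]
  have hlt : ∫ k, g k ∂(mu1.prod mu1) < ∫ k, f k ∂(mu1.prod mu1) := by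
    by_contra hnot
    push_neg at hnot
    have heq : ∫ k, (f - g) k ∂(mu1.prod mu1) = 0 := by
      rw [integral_sub' hfi hgi]
      have := integral_mono_ae hgi hfi hle
      linarith
    have hnn : 0 ≤ᵐ[mu1.prod mu1] (f - g) := by
      filter_upwards [hle] with k hk
      simpa [Pi.sub_apply] using hk
    have hz := (integral_eq_zero_iff_of_nonneg_ae hnn (hfi.sub hgi)).mp heq
    have hFalse : ∀ᵐ _k ∂(mu1.prod mu1), False := by
      filter_upwards [hpos, hz] with k h1 h2
      simp only [Pi.sub_apply, Pi.zero_apply] at h2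
      linarith
    rw [ae_iff] at hFalse
    simp only [not_false_iff, Set.setOf_true] at hFalse
    exact prod_ne_zero hFalse
  rw [lhs_eq, F_eq]
  simp only [← hgdef, ← hfdef]
  linarith

lemma sin_ne_zero_of {θ : ℝ} (hθ : θ ∈ Set.Ico (0:ℝ) (2 * π)) (h0 : θ ≠ 0) (h2 : θ ≠ π) :
    Real.sin θ ≠ 0 := by
  have hπ := Real.pi_pos
  intro h
  rcases Real.sin_eq_zero_iff.mp h with ⟨n, hn⟩
  have hn' : (n:ℝ) = θ / π := by
    field_simp
    linarith [hn]
  have hge : (0:ℝ) ≤ (n:ℝ) := by rw [hn']; exact div_nonneg hθ.1 hπ.le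
  have hlt : (n:ℝ) < 2 := by
    rw [hn', div_lt_iff₀ hπ]
    linarith [hθ.2]
  have hge' : (0:ℤ) ≤ n := by exact_mod_cast hge
  have hlt' : (n:ℤ) < 2 := by exact_mod_cast hlt
  interval_cases n
  · apply h0; rw [← hn]; simp
  · apply h2; rw [← hn]; simp

lemma cos_ne_zero_of {θ : ℝ} (hθ : θ ∈ Set.Ico (0:ℝ) (2 * π)) (h1 : θ ≠ π / 2)
    (h3 : θ ≠ 3 * π / 2) : Real.cos θ ≠ 0 := by
  have hπ := Real.pi_pos
  intro h
  rcases Real.cos_eq_zero_iff.mp h with ⟨n, hn⟩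
  have hn' : (2 * (n:ℝ) + 1) = 2 * θ / π := by
    field_simp
    linarith [hn]
  have hge : (0:ℝ) ≤ 2 * (n:ℝ) + 1 := by
    rw [hn']; exact div_nonneg (by linarith [hθ.1]) hπ.le
  have hlt : 2 * (n:ℝ) + 1 < 4 := by
    rw [hn', div_lt_iff₀ hπ]
    linarith [hθ.2]
  have hge' : (0:ℤ) ≤ 2 * n + 1 := by exact_mod_cast hge
  have hlt' : (2 * n + 1 : ℤ) < 4 := by exact_mod_cast hlt
  have : n = 0 ∨ n = 1 := by omega
  rcases this with rfl | rfl
  · apply h1; rw [hn]; push_cast; ring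
  · apply h3; rw [hn]; push_cast; ring

theorem main :
    (∀ θ : ℝ,
      Real.sin θ ^ 2 * compassFreeEnergy (Real.pi / 2)
        + Real.cos θ ^ 2 * compassFreeEnergy 0 ≤ compassFreeEnergy θ) ∧
    (∀ θ ∈ Set.Ico (0 : ℝ) (2 * Real.pi),
      ((∀ θ' ∈ Set.Ico (0 : ℝ) (2 * Real.pi), compassFreeEnergy θ ≤ compassFreeEnergy θ') ↔
        θ ∈ ({0, Real.pi / 2, Real.pi, 3 * Real.pi / 2} : Set ℝ))) := by
  have hπ := Real.pi_pos
  have hmin0 : ∀ θ' : ℝ, compassFreeEnergy 0 ≤ compassFreeEnergy θ' := by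
    intro θ'
    have h1 := key_le θ'
    rw [F_swap] at h1
    have hsc := Real.sin_sq_add_cos_sq θ'
    have e : Real.sin θ' ^ 2 * compassFreeEnergy 0 + Real.cos θ' ^ 2 * compassFreeEnergy 0
        = compassFreeEnergy 0 := by rw [← add_mul, hsc, one_mul]
    linarith
  constructor
  · exact key_le
  · intro θ hθ
    constructor
    · intro hmin
      by_contra hnotin
      simp only [Set.mem_insert_iff, Set.mem_singleton_iff, not_or] at hnotin
      obtain ⟨h0, h1, h2, h3⟩ := hnotin
      have hsin := sin_ne_zero_of hθ h0 h2
      have hcos := cos_ne_zero_of hθ h1 h3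
      have hlt := key_lt hsin hcos
      rw [F_swap] at hlt
      have hsc := Real.sin_sq_add_cos_sq θ
      have e : Real.sin θ ^ 2 * compassFreeEnergy 0 + Real.cos θ ^ 2 * compassFreeEnergy 0
          = compassFreeEnergy 0 := by rw [← add_mul, hsc, one_mul]
      have hle := hmin 0 ⟨le_refl 0, by positivity⟩
      linarith
    · intro hin θ' _
      have h2 := hmin0 θ'
      simp only [Set.mem_insert_iff, Set.mem_singleton_iff] at hin
      rcases hin with rfl | rfl | rfl | rfl
      · exact h2
      · rw [F_swap]; exact h2
      · rw [F_pi]; exact h2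
      · rw [F_three, F_swap]; exact h2

end CompassAux

/-- `F(θ) ≥ sin²θ · F(π/2) + cos²θ · F(0)`, and consequently `F` attains its
minimum over `[0,2π)` exactly at `θ ∈ {0, π/2, π, 3π/2}`. -/
theorem compass_spin_wave_minimizers :
    (∀ θ : ℝ,
      Real.sin θ ^ 2 * compassFreeEnergy (Real.pi / 2)
        + Real.cos θ ^ 2 * compassFreeEnergy 0 ≤ compassFreeEnergy θ) ∧
    (∀ θ ∈ Set.Ico (0 : ℝ) (2 * Real.pi),
      ((∀ θ' ∈ Set.Ico (0 : ℝ) (2 * Real.pi), compassFreeEnergy θ ≤ compassFreeEnergy θ') ↔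
        θ ∈ ({0, Real.pi / 2, Real.pi, 3 * Real.pi / 2} : Set ℝ))) :=
  CompassAux.main
end

section
/- Subadditivity of the chessboard norm: Let T be a finite index set and let z: (events) → [0,∞) be defined by z(A)^{|T|} = μ(∩_{t∈T} ϑ_t(A)), where μ satisfies the chessboard estimate μ(∩_{t∈T} ϑ_t(A_{k_t})) ≤ Π_{t∈T} z(A_{k_t}) for any assignment t ↦ k_t. If A ⊆ ∪_k A_k (countable union), then z(A) ≤ Σ_k z(A_k). -/
open MeasureTheory

lemma tsum_prod_fin_pow (n : ℕ) (g : ℕ → ENNReal) :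
    ∑' κ : Fin n → ℕ, ∏ i, g (κ i) = (∑' k, g k) ^ n := by
  induction n with
  | zero =>
      simp only [Finset.univ_eq_empty, Finset.prod_empty, pow_zero]
      exact tsum_eq_single default fun b hb => absurd (Subsingleton.elim b default) hb
  | succ n ih =>
      rw [← (Fin.consEquiv (fun _ : Fin (n+1) => ℕ)).tsum_eq]
      simp only [Fin.consEquiv_apply]
      have : ∀ p : ℕ × (Fin n → ℕ),
          (∏ i, g ((Fin.cons p.1 p.2 : Fin (n+1) → ℕ) i)) = g p.1 * ∏ i, g (p.2 i) := by
        intro p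
        rw [Fin.prod_univ_succ]
        simp
      calc ∑' p : ℕ × (Fin n → ℕ), ∏ i, g ((Fin.cons p.1 p.2 : Fin (n+1) → ℕ) i)
          = ∑' p : ℕ × (Fin n → ℕ), g p.1 * ∏ i, g (p.2 i) := by
            exact tsum_congr this
        _ = ∑' k, ∑' κ : Fin n → ℕ, g k * ∏ i, g (κ i) := ENNReal.tsum_prod (f := fun k (κ : Fin n → ℕ) => g k * ∏ i, g (κ i))
        _ = ∑' k, g k * ∑' κ : Fin n → ℕ, ∏ i, g (κ i) := by
            congr 1; ext k; exact ENNReal.tsum_mul_left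
        _ = (∑' k, g k) * (∑' κ : Fin n → ℕ, ∏ i, g (κ i)) :=
            ENNReal.tsum_mul_right
        _ = (∑' k, g k) ^ (n + 1) := by rw [ih, pow_succ, mul_comm]

lemma tsum_prod_fintype_pow (T : Type*) [Fintype T] (g : ℕ → ENNReal) :
    ∑' κ : T → ℕ, ∏ t, g (κ t) = (∑' k, g k) ^ Fintype.card T := by
  classical
  let e := Fintype.equivFin T
  rw [← tsum_prod_fin_pow (Fintype.card T) g]
  refine ((Equiv.arrowCongr e (Equiv.refl ℕ)).symm.tsum_eq _).symm.trans ?_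
  refine tsum_congr fun κ => ?_
  exact Fintype.prod_equiv e _ _ fun t => by simp [Equiv.arrowCongr]

/-- Subadditivity of the chessboard norm
`z(A) = μ(⋂_t ϑ_t(A))^{1/|T|}`: if the chessboard estimate holds for the
covering events and `A ⊆ ⋃_k A_k`, then `z(A) ≤ Σ_k z(A_k)`. -/
theorem chessboard_subadditivity (Ω T : Type*) [MeasurableSpace Ω]
    [Fintype T] [Nonempty T]
    (μ : Measure Ω) [IsProbabilityMeasure μ]
    (ϑ : T → Set Ω → Set Ω)
    (hϑunion : ∀ t (s : ℕ → Set Ω), ϑ t (⋃ k, s k) = ⋃ k, ϑ t (s k))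
    (hϑmono : ∀ t, Monotone (ϑ t))
    (A : Set Ω) (Ak : ℕ → Set Ω) (hcover : A ⊆ ⋃ k, Ak k)
    (hchess : ∀ κ : T → ℕ,
      μ (⋂ t, ϑ t (Ak (κ t))) ≤
        ∏ t, (μ (⋂ t', ϑ t' (Ak (κ t))) ^ (1 / (Fintype.card T : ℝ)))) :
    μ (⋂ t, ϑ t A) ^ (1 / (Fintype.card T : ℝ)) ≤
      ∑' k, μ (⋂ t, ϑ t (Ak k)) ^ (1 / (Fintype.card T : ℝ)) := by
  classical
  set n := Fintype.card T with hn
  have hn0 : (n : ℝ) ≠ 0 := Nat.cast_ne_zero.2 (Fintype.card_ne_zero)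
  set z : ℕ → ENNReal := fun k => μ (⋂ t, ϑ t (Ak k)) ^ (1 / (n : ℝ)) with hz
  -- covering of the intersection by choice functions
  have hsub : (⋂ t, ϑ t A) ⊆ ⋃ κ : T → ℕ, ⋂ t, ϑ t (Ak (κ t)) := by
    intro x hx
    have hx' : ∀ t, ∃ k, x ∈ ϑ t (Ak k) := by
      intro t
      have : x ∈ ϑ t A := Set.mem_iInter.1 hx t
      have : x ∈ ϑ t (⋃ k, Ak k) := hϑmono t hcover this
      rw [hϑunion] at this
      exact Set.mem_iUnion.1 this
    choose κ hκ using hx'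
    exact Set.mem_iUnion.2 ⟨κ, Set.mem_iInter.2 hκ⟩
  have h1 : μ (⋂ t, ϑ t A) ≤ ∑' κ : T → ℕ, μ (⋂ t, ϑ t (Ak (κ t))) :=
    (measure_mono hsub).trans (measure_iUnion_le _)
  have h2 : μ (⋂ t, ϑ t A) ≤ (∑' k, z k) ^ n := by
    refine h1.trans ?_
    rw [← tsum_prod_fintype_pow T z]
    exact ENNReal.tsum_le_tsum fun κ => hchess κ
  calc μ (⋂ t, ϑ t A) ^ (1 / (n : ℝ))
      ≤ ((∑' k, z k) ^ n) ^ (1 / (n : ℝ)) :=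
        ENNReal.rpow_le_rpow h2 (by positivity)
    _ = ∑' k, z k := by
        rw [← ENNReal.rpow_natCast, ← ENNReal.rpow_mul,
          mul_one_div, div_self hn0, ENNReal.rpow_one]
end

section
/- Gaussian domination identity: Let G_L be a symmetric positive-definite matrix (on the orthogonal complement of constants) and define Z_L(h) := E[exp(-β⟨S+h, G_L^{-1}(S+h)⟩)] for a random field S with law ν on R^{T_L}. If Z_L(h) ≤ Z_L(0) for all h in the range of G_L, then for the tilted measure μ (with density proportional to e^{-β⟨S,G_L^{-1}S⟩} dν) one has E_μ[e^{-2β⟨g, S⟩}] ≤ e^{β⟨g, G_L g⟩} for all g of the form G_L^{-1}h, and consequently (expanding to second order, using E_μ[⟨g,S⟩] = 0) the variance bound E_μ[⟨g,S⟩²] ≤ (1/(2β))⟨g, G_L g⟩. -/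
open MeasureTheory

private lemma exp_quad (x : ℝ) : x ^ 2 + 2 ≤ Real.exp x + Real.exp (-x) := by
  wlog hx : 0 ≤ x with H
  · have := H (-x) (by linarith)
    simpa [neg_neg, add_comm] using this
  have hs : x / 2 ≤ Real.sinh (x / 2) := Real.self_le_sinh_iff.2 (by linarith)
  rw [Real.sinh_eq] at hs
  have h2 : Real.exp (x / 2) * Real.exp (-(x / 2)) = 1 := by
    rw [← Real.exp_add]; simp
  have h3 : Real.exp (x / 2) * Real.exp (x / 2) = Real.exp x := by
    rw [← Real.exp_add]; ring_nf
  have h4 : Real.exp (-(x / 2)) * Real.exp (-(x / 2)) = Real.exp (-x) := by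
    rw [← Real.exp_add]; ring_nf
  nlinarith [Real.exp_pos (x / 2), Real.exp_pos (-(x / 2)), hs, hx]

private lemma exp_le_quad {u : ℝ} (hu : |u| ≤ 1) : Real.exp u ≤ 1 + u + u ^ 2 := by
  have h := Real.exp_bound hu (n := 2) (by norm_num)
  have hs : ∑ i ∈ Finset.range 2, u ^ i / (i.factorial : ℝ) = 1 + u := by
    simp [Finset.sum_range_succ]
  rw [hs] at h
  norm_num at h
  have h2 := abs_le.mp h
  nlinarith [sq_abs u, sq_nonneg u]

private lemma arith_limit {β c Z0 J : ℝ} (hβ : 0 < β) (hZ0 : 0 < Z0)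
    (hmain : ∀ l : ℝ,
      2 * Z0 + 4 * β ^ 2 * l ^ 2 * J ≤ 2 * Z0 * Real.exp (β * l ^ 2 * c)) :
    J ≤ Z0 * ((1 / (2 * β)) * c) := by
  refine le_of_forall_pos_le_add fun ε hε => ?_
  have hDpos : (0:ℝ) < Z0 * c ^ 2 + 1 := by positivity
  set D : ℝ := Z0 * c ^ 2 + 1 with hD
  set δ : ℝ := min (1 / (β * (|c| + 1))) (2 * ε / D) with hδdef
  have hδpos : 0 < δ := lt_min (by positivity) (by positivity)
  have hl2 : (Real.sqrt δ) ^ 2 = δ := Real.sq_sqrt hδpos.le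
  have hm := hmain (Real.sqrt δ)
  rw [hl2] at hm
  have hEpos : (0:ℝ) < β * (|c| + 1) := by positivity
  have h6 : δ * (β * (|c| + 1)) ≤ 1 := by
    have h5 : δ ≤ 1 / (β * (|c| + 1)) := min_le_left _ _
    exact (le_div_iff₀ hEpos).mp h5
  have hu1 : |β * δ * c| ≤ 1 := by
    have h7 : |β * δ * c| = β * δ * |c| := by
      rw [abs_mul, abs_of_nonneg (by positivity : (0:ℝ) ≤ β * δ)]
    rw [h7]
    nlinarith [abs_nonneg c, hβ, hδpos, h6]
  have hexp : Real.exp (β * δ * c) ≤ 1 + β * δ * c + (β * δ * c) ^ 2 := exp_le_quad hu1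
  have hδD : δ * D ≤ 2 * ε := by
    have h9 : δ ≤ 2 * ε / D := min_le_right _ _
    exact (le_div_iff₀ hDpos).mp h9
  have hδc : δ * (Z0 * c ^ 2) ≤ 2 * ε := by nlinarith [hδpos]
  have h8 : 4 * β ^ 2 * δ * J ≤ 4 * β ^ 2 * δ * (Z0 * ((1 / (2 * β)) * c) + ε) := by
    have hm2 : 4 * β ^ 2 * δ * J ≤ 2 * Z0 * (β * δ * c + (β * δ * c) ^ 2) := by
      nlinarith [hm, hexp, hZ0]
    have hexpand : 4 * β ^ 2 * δ * (Z0 * ((1 / (2 * β)) * c) + ε)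
        = 2 * Z0 * (β * δ * c) + 4 * β ^ 2 * δ * ε := by
      field_simp; ring
    rw [hexpand]
    have h10 : 2 * Z0 * (β * δ * c) ^ 2 ≤ 4 * β ^ 2 * δ * ε := by
      have h11 := mul_le_mul_of_nonneg_left hδc (by positivity : (0:ℝ) ≤ 2 * β ^ 2 * δ)
      nlinarith [h11]
    nlinarith [hm2, h10]
  have hpos : (0:ℝ) < 4 * β ^ 2 * δ := by positivity
  exact le_of_mul_le_mul_left h8 hpos

private lemma key_alg {T : Type*} [Fintype T] (G P : Matrix T T ℝ) (hPsymm : P.IsSymm)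
    (g : T → ℝ) (hPG : P.mulVec (G.mulVec g) = g) (l : ℝ) (S : T → ℝ) :
    (∑ x, (S x + (G.mulVec (l • g)) x) * (P.mulVec (fun y => S y + (G.mulVec (l • g)) y)) x)
      = (∑ x, S x * P.mulVec S x) + 2 * l * (∑ x, g x * S x)
        + l ^ 2 * (∑ x, g x * G.mulVec g x) := by
  have hfun : (fun y => S y + (G.mulVec (l • g)) y) = S + l • G.mulVec g := by
    funext y; simp [Matrix.mulVec_smul]
  have hGl : G.mulVec (l • g) = l • G.mulVec g := Matrix.mulVec_smul ..
  have e1 : ∀ v w : T → ℝ, (∑ x, v x * w x) = dotProduct v w := fun _ _ => rfl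
  rw [hfun, hGl]
  simp only [e1]
  have hPh : P.mulVec (l • G.mulVec g) = l • g := by
    rw [Matrix.mulVec_smul, hPG]
  rw [Matrix.mulVec_add, hPh]
  have hsymm : dotProduct (l • G.mulVec g) (P.mulVec S)
      = l * dotProduct g S := by
    rw [smul_dotProduct, Matrix.dotProduct_mulVec, ← Matrix.mulVec_transpose,
      hPsymm.eq, hPG]
    simp [smul_eq_mul]
  have e2 : (fun x => S x + (l • G.mulVec g) x) = S + l • G.mulVec g := rfl
  rw [e2]
  simp only [add_dotProduct, dotProduct_add, dotProduct_smul,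
    smul_dotProduct, smul_eq_mul, hsymm]
  rw [dotProduct_comm S g, dotProduct_comm (G.mulVec g) g]
  ring

/-- From Gaussian domination `Z_L(h) ≤ Z_L(0)` (for `h` in the range of `G_L`)
one deduces, for the tilted measure `μ ∝ e^{-β⟨S, G_L⁻¹ S⟩} dν`, the exponential
bound `E_μ[e^{-2β⟨g,S⟩}] ≤ e^{β⟨g, G_L g⟩}` for `g = G_L⁻¹ h`, and consequently
(using `E_μ[⟨g,S⟩] = 0`) the infrared variance bound
`E_μ[⟨g,S⟩²] ≤ (2β)⁻¹ ⟨g, G_L g⟩`. -/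
theorem gaussian_domination_infrared (T : Type*) [Fintype T]
    (ν : Measure (T → ℝ)) (β : ℝ) (hβ : 0 < β)
    (G P : Matrix T T ℝ) (hGsymm : G.IsSymm) (hPsymm : P.IsSymm)
    (hinv : ∀ g : T → ℝ, (∑ x, g x = 0) →
      P.mulVec (G.mulVec g) = g ∧ (∑ x, (G.mulVec g) x = 0))
    (Z : (T → ℝ) → ℝ)
    (hZ : ∀ h, Z h =
      ∫ S, Real.exp (-β * ∑ x, (S x + h x) * (P.mulVec (fun y => S y + h y)) x) ∂ν)
    (hZ0 : 0 < Z 0)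
    (hint : ∀ h : T → ℝ, Integrable
      (fun S => Real.exp (-β * ∑ x, (S x + h x) * (P.mulVec (fun y => S y + h y)) x)) ν)
    (hdom : ∀ g : T → ℝ, Z (G.mulVec g) ≤ Z 0)
    (hmean : ∀ g : T → ℝ, (∑ x, g x = 0) →
      ∫ S, (∑ x, g x * S x) * Real.exp (-β * ∑ x, S x * (P.mulVec S) x) ∂ν = 0) :
    ∀ g : T → ℝ, (∑ x, g x = 0) → g ∈ Set.range P.mulVec →
      ((Z 0)⁻¹ *
          ∫ S, Real.exp (-2 * β * ∑ x, g x * S x) *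
            Real.exp (-β * ∑ x, S x * (P.mulVec S) x) ∂ν
        ≤ Real.exp (β * ∑ x, g x * (G.mulVec g) x)) ∧
      ((Z 0)⁻¹ *
          ∫ S, (∑ x, g x * S x) ^ 2 *
            Real.exp (-β * ∑ x, S x * (P.mulVec S) x) ∂ν
        ≤ (1 / (2 * β)) * ∑ x, g x * (G.mulVec g) x) := by
  intro g hg _hrange
  have hPG : P.mulVec (G.mulVec g) = g := (hinv g hg).1
  have key := key_alg G P hPsymm g hPG
  set c : ℝ := ∑ x, g x * G.mulVec g x with hc
  have hIZ : ∀ l : ℝ,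
      ∫ S, Real.exp (-2 * β * l * ∑ x, g x * S x) *
          Real.exp (-β * ∑ x, S x * (P.mulVec S) x) ∂ν
        = Real.exp (β * l ^ 2 * c) * Z (G.mulVec (l • g)) := by
    intro l
    rw [hZ, ← integral_const_mul]
    congr 1; funext S
    rw [key l S, ← Real.exp_add, ← Real.exp_add]
    congr 1; ring
  have hI : ∀ l : ℝ, Integrable
      (fun S => Real.exp (-2 * β * l * ∑ x, g x * S x) *
        Real.exp (-β * ∑ x, S x * (P.mulVec S) x)) ν := by
    intro l
    have h0 := (hint (G.mulVec (l • g))).const_mul (Real.exp (β * l ^ 2 * c))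
    have heq : (fun S : T → ℝ => Real.exp (β * l ^ 2 * c) *
        Real.exp (-β * ∑ x, (S x + G.mulVec (l • g) x) *
          (P.mulVec fun y => S y + G.mulVec (l • g) y) x))
        = fun S => Real.exp (-2 * β * l * ∑ x, g x * S x) *
          Real.exp (-β * ∑ x, S x * (P.mulVec S) x) := by
      funext S
      rw [key l S, ← Real.exp_add, ← Real.exp_add]
      congr 1; ring
    rw [heq] at h0
    exact h0
  have hIbound : ∀ l : ℝ,
      ∫ S, Real.exp (-2 * β * l * ∑ x, g x * S x) *
          Real.exp (-β * ∑ x, S x * (P.mulVec S) x) ∂ν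
        ≤ Real.exp (β * l ^ 2 * c) * Z 0 := by
    intro l
    rw [hIZ l]
    exact mul_le_mul_of_nonneg_left (hdom (l • g)) (Real.exp_pos _).le
  have hw : Integrable (fun S => Real.exp (-β * ∑ x, S x * (P.mulVec S) x)) ν := by
    have := hint 0
    simpa using this
  have hZ0w : Z 0 = ∫ S, Real.exp (-β * ∑ x, S x * (P.mulVec S) x) ∂ν := by
    have := hZ 0
    simpa using this
  -- Part 1
  have part1 : (Z 0)⁻¹ *
      ∫ S, Real.exp (-2 * β * ∑ x, g x * S x) *
        Real.exp (-β * ∑ x, S x * (P.mulVec S) x) ∂ν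
      ≤ Real.exp (β * c) := by
    have h1 := hIbound 1
    simp only [mul_one, one_pow] at h1
    rw [inv_mul_le_iff₀ hZ0]
    calc ∫ S, Real.exp (-2 * β * ∑ x, g x * S x) *
          Real.exp (-β * ∑ x, S x * (P.mulVec S) x) ∂ν
        ≤ Real.exp (β * c) * Z 0 := h1
      _ = Z 0 * Real.exp (β * c) := mul_comm _ _
  have hcontw : Continuous (fun S : T → ℝ => Real.exp (-β * ∑ x, S x * (P.mulVec S) x)) := by
    apply Real.continuous_exp.comp
    apply continuous_const.mul
    apply continuous_finset_sum
    intro x _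
    apply (continuous_apply x).mul
    simp only [Matrix.mulVec, dotProduct]
    exact continuous_finset_sum _ fun y _ => continuous_const.mul (continuous_apply y)
  have hcontt : Continuous (fun S : T → ℝ => ∑ x, g x * S x) :=
    continuous_finset_sum _ fun x _ => continuous_const.mul (continuous_apply x)
  have hJint : Integrable (fun S => (∑ x, g x * S x) ^ 2 *
      Real.exp (-β * ∑ x, S x * (P.mulVec S) x)) ν := by
    refine Integrable.mono' (((hI 1).add (hI (-1))).const_mul ((4 * β ^ 2)⁻¹))
      ((hcontt.pow 2).mul hcontw).aestronglyMeasurable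
      (Filter.Eventually.of_forall fun S => ?_)
    simp only [Pi.add_apply]
    set t := ∑ x, g x * S x
    set w := Real.exp (-β * ∑ x, S x * (P.mulVec S) x) with hwdef
    have hwpos : 0 < w := Real.exp_pos _
    rw [Real.norm_eq_abs, abs_of_nonneg (by positivity)]
    have e1 : Real.exp (-2 * β * 1 * t) = Real.exp (-(2 * β * t)) := by congr 1; ring
    have e2 : Real.exp (-2 * β * (-1) * t) = Real.exp (2 * β * t) := by congr 1; ring
    have hq := mul_le_mul_of_nonneg_right (exp_quad (2 * β * t)) hwpos.le
    rw [e1, e2, le_inv_mul_iff₀ (by positivity)]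
    nlinarith [hq, hwpos, sq_nonneg (β * t)]
  have hmain : ∀ l : ℝ,
      2 * Z 0 + 4 * β ^ 2 * l ^ 2 *
          (∫ S, (∑ x, g x * S x) ^ 2 *
            Real.exp (-β * ∑ x, S x * (P.mulVec S) x) ∂ν)
        ≤ 2 * Z 0 * Real.exp (β * l ^ 2 * c) := by
    intro l
    have hA := hIbound l
    have hB := hIbound (-l)
    rw [neg_sq] at hB
    have hstep : ∫ S, (2 * Real.exp (-β * ∑ x, S x * (P.mulVec S) x)
          + 4 * β ^ 2 * l ^ 2 * ((∑ x, g x * S x) ^ 2 *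
            Real.exp (-β * ∑ x, S x * (P.mulVec S) x))) ∂ν
        ≤ ∫ S, (Real.exp (-2 * β * l * ∑ x, g x * S x) *
            Real.exp (-β * ∑ x, S x * (P.mulVec S) x)
          + Real.exp (-2 * β * (-l) * ∑ x, g x * S x) *
            Real.exp (-β * ∑ x, S x * (P.mulVec S) x)) ∂ν := by
      refine integral_mono ((hw.const_mul 2).add (hJint.const_mul _))
        ((hI l).add (hI (-l))) fun S => ?_
      set t := ∑ x, g x * S x
      set w := Real.exp (-β * ∑ x, S x * (P.mulVec S) x) with hwdef
      have hwpos : 0 < w := Real.exp_pos _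
      have e1 : Real.exp (-2 * β * l * t) = Real.exp (-(2 * β * l * t)) := by congr 1; ring
      have e2 : Real.exp (-2 * β * (-l) * t) = Real.exp (2 * β * l * t) := by congr 1; ring
      have hq := mul_le_mul_of_nonneg_right (exp_quad (2 * β * l * t)) hwpos.le
      simp only [e1, e2]
      nlinarith [hq, hwpos]
    rw [integral_add (hw.const_mul 2) (hJint.const_mul _),
      integral_add (hI l) (hI (-l)),
      integral_const_mul, integral_const_mul, ← hZ0w] at hstep
    linarith [hA, hB, hstep]
  have part2 : (Z 0)⁻¹ *
      (∫ S, (∑ x, g x * S x) ^ 2 *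
        Real.exp (-β * ∑ x, S x * (P.mulVec S) x) ∂ν)
      ≤ (1 / (2 * β)) * c := by
    rw [inv_mul_le_iff₀ hZ0]
    exact arith_limit hβ hZ0 hmain
  exact ⟨part1, part2⟩
end
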